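/- Fix a fitness landscape with a_σ > 0 for all σ ∈ {0,1}^L and a mutation rate 0 < μ < 1/2. Then each coordinate function r^σ of the quasispecies map is Lipschitz on the set of probability distributions over {0,1}^L with respect to the ℓ¹ norm, with Lipschitz constant K = (max_τ a_τ / min_τ a_τ)·((1−μ)^L − μ^L); that is, for all probability vectors x, y on {0,1}^L and all σ, |r^σ(x) − r^σ(y)| ≤ K·‖x − y‖₁. Moreover, for every probability vector x and all σ, σ', the partial derivative satisfies |∂r^{σ'}(x)/∂x_σ| = (a_σ/Σ_τ a_τ x_τ)·|Q_{σσ'} − r^{σ'}(x)| ≤ K. -/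

import Mathlib

open Finset

abbrev Genome (L : ℕ) := Fin L → Bool

/-- Mutation transition matrix entry: `Q_{στ} = μ^{d_H(σ,τ)} (1-μ)^{L-d_H(σ,τ)}`. -/
noncomputable def Qmat (L : ℕ) (μ : ℝ) (σ τ : Genome L) : ℝ :=
  μ ^ (hammingDist σ τ) * (1 - μ) ^ (L - hammingDist σ τ)

/-- The quasispecies map `r`: `r^σ(x) = (Σ_τ a_τ Q_{τσ} x_τ)/(Σ_τ a_τ x_τ)`. -/
noncomputable def qmap {L : ℕ} (a : Genome L → ℝ) (μ : ℝ) (x : Genome L → ℝ)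
    (σ : Genome L) : ℝ :=
  (∑ τ, a τ * Qmat L μ τ σ * x τ) / (∑ τ, a τ * x τ)

/-!
Each coordinate `r^σ(x)` is the mean of the values `Q_{τσ}` under the weights `a_τ x_τ`. Such a
weighted mean `W(x) = Σ a q x / Σ a x` satisfies
`W(x) - W(y) = Σ_τ a_τ (q_τ - W(y)) (x_τ - y_τ) / Σ a x` and `∂W/∂x_τ = a_τ (q_τ - W(x)) / Σ a x`.
Both the mean and the `q_τ` lie in `[μ^L, (1-μ)^L]`, so `|q_τ - W| ≤ (1-μ)^L - μ^L`, while
`a_τ ≤ max a` and `Σ a x ≥ min a` on probability vectors.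
-/

section WeightedMean

variable {ι : Type*} [Fintype ι]

noncomputable def weightedMean (a q x : ι → ℝ) : ℝ :=
  (∑ i, a i * q i * x i) / ∑ i, a i * x i

variable (a q : ι → ℝ)

theorem weightedMean_mem_Icc {x : ι → ℝ} {lo hi : ℝ} (hq : ∀ i, q i ∈ Set.Icc lo hi)
    (hw : ∀ i, 0 ≤ a i * x i) (hpos : 0 < ∑ i, a i * x i) :
    weightedMean a q x ∈ Set.Icc lo hi := by
  rw [weightedMean, Set.mem_Icc, le_div_iff₀ hpos, div_le_iff₀ hpos, mul_sum, mul_sum]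
  constructor <;> refine sum_le_sum fun i _ => ?_
  · nlinarith [(hq i).1, hw i]
  · nlinarith [(hq i).2, hw i]

theorem weightedMean_sub_weightedMean {x y : ι → ℝ} (hx : ∑ i, a i * x i ≠ 0)
    (hy : ∑ i, a i * y i ≠ 0) :
    weightedMean a q x - weightedMean a q y =
      (∑ i, a i * (q i - weightedMean a q y) * (x i - y i)) / ∑ i, a i * x i := by
  have hexpand : ∑ i, a i * (q i - weightedMean a q y) * (x i - y i) =
      (∑ i, a i * q i * x i) - (∑ i, a i * q i * y i) -
        weightedMean a q y * ((∑ i, a i * x i) - ∑ i, a i * y i) := by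
    have hterm : ∀ i, a i * (q i - weightedMean a q y) * (x i - y i) =
        (a i * q i * x i - a i * q i * y i) - weightedMean a q y * (a i * x i - a i * y i) :=
      fun i => by ring
    simp only [hterm, sum_sub_distrib, ← mul_sum]
  rw [hexpand, weightedMean, weightedMean]
  field_simp
  ring

theorem abs_weightedMean_sub_le {x y : ι → ℝ} {M D : ℝ} (hM : ∀ i, |a i| ≤ M)
    (hD : ∀ i, |q i - weightedMean a q y| ≤ D) (hx : 0 < ∑ i, a i * x i)
    (hy : ∑ i, a i * y i ≠ 0) :
    |weightedMean a q x - weightedMean a q y| ≤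
      M * D / (∑ i, a i * x i) * ∑ i, |x i - y i| := by
  have hnum : |∑ i, a i * (q i - weightedMean a q y) * (x i - y i)| ≤
      M * D * ∑ i, |x i - y i| := by
    rw [mul_sum]
    refine (abs_sum_le_sum_abs _ _).trans (sum_le_sum fun i _ => ?_)
    rw [abs_mul, abs_mul]
    gcongr
    · exact (abs_nonneg _).trans (hM i)
    · exact hM i
    · exact hD i
  rw [weightedMean_sub_weightedMean a q hx.ne' hy, abs_div, abs_of_pos hx, div_mul_eq_mul_div]
  gcongr

theorem hasDerivAt_sum_mul_update [DecidableEq ι] (c x : ι → ℝ) (i : ι) (s : ℝ) :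
    HasDerivAt (fun t => ∑ j, c j * Function.update x i t j) (c i) s := by
  have hcoord := hasDerivAt_pi.1 (hasDerivAt_update x i s)
  simpa [Pi.single_apply] using HasDerivAt.fun_sum (u := univ) fun j _ =>
    (hcoord j).const_mul (c j)

theorem hasDerivAt_weightedMean_update [DecidableEq ι] {x : ι → ℝ}
    (hx : ∑ j, a j * x j ≠ 0) (i : ι) :
    HasDerivAt (fun s => weightedMean a q (Function.update x i s))
      (a i / (∑ j, a j * x j) * (q i - weightedMean a q x)) (x i) := by
  have hquot := (hasDerivAt_sum_mul_update (fun j => a j * q j) x i (x i)).fun_div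
    (hasDerivAt_sum_mul_update a x i (x i)) (by rwa [Function.update_eq_self])
  simp only [Function.update_eq_self] at hquot
  refine hquot.congr_deriv ?_
  rw [weightedMean]
  field_simp

end WeightedMean

theorem inf'_le_sum_mul_of_sum_eq_one {ι : Type*} [Fintype ι] [Nonempty ι] (a x : ι → ℝ)
    (hx : ∀ i, 0 ≤ x i) (hsum : ∑ i, x i = 1) :
    univ.inf' univ_nonempty a ≤ ∑ i, a i * x i := by
  calc univ.inf' univ_nonempty a = ∑ i, univ.inf' univ_nonempty a * x i := by
        rw [← mul_sum, hsum, mul_one]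
    _ ≤ ∑ i, a i * x i :=
        sum_le_sum fun i _ => mul_le_mul_of_nonneg_right (inf'_le a (mem_univ i)) (hx i)

theorem Qmat_mem_Icc {L : ℕ} {μ : ℝ} (hμ0 : 0 ≤ μ) (hμ : μ ≤ 1 / 2) (σ τ : Genome L) :
    Qmat L μ σ τ ∈ Set.Icc (μ ^ L) ((1 - μ) ^ L) := by
  have hd : hammingDist σ τ ≤ L := by simpa using hammingDist_le_card_fintype (x := σ) (y := τ)
  have hsplit (b : ℝ) : b ^ L = b ^ hammingDist σ τ * b ^ (L - hammingDist σ τ) := by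
    rw [← pow_add, Nat.add_sub_cancel' hd]
  have hμ1 : μ ≤ 1 - μ := by linarith
  rw [Set.mem_Icc, hsplit μ, hsplit (1 - μ), Qmat]
  constructor
  · gcongr
  · gcongr
    exact pow_nonneg (by linarith) _

theorem qmap_eq_weightedMean {L : ℕ} (a : Genome L → ℝ) (μ : ℝ) (x : Genome L → ℝ)
    (σ : Genome L) : qmap a μ x σ = weightedMean a (fun τ => Qmat L μ τ σ) x := rfl

theorem abs_Qmat_sub_qmap_le {L : ℕ} {a : Genome L → ℝ} (ha : ∀ σ, 0 < a σ) {μ : ℝ}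
    (hμ0 : 0 ≤ μ) (hμ : μ ≤ 1 / 2) {x : Genome L → ℝ} (hx : ∀ τ, 0 ≤ x τ)
    (hs : ∑ τ, x τ = 1) (σ τ : Genome L) :
    |Qmat L μ τ σ - qmap a μ x σ| ≤ (1 - μ) ^ L - μ ^ L := by
  have hQ : ∀ τ, Qmat L μ τ σ ∈ Set.Icc (μ ^ L) ((1 - μ) ^ L) :=
    fun τ => Qmat_mem_Icc hμ0 hμ τ σ
  have hpos : 0 < ∑ τ, a τ * x τ :=
    ((lt_inf'_iff _).2 fun τ _ => ha τ).trans_le (inf'_le_sum_mul_of_sum_eq_one a x hx hs)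
  rw [← Real.dist_eq]
  exact Real.dist_le_of_mem_Icc (hQ τ)
    (weightedMean_mem_Icc _ _ hQ (fun τ => mul_nonneg (ha τ).le (hx τ)) hpos)

/-- **Lipschitz continuity of the quasispecies map (Lemma).**
Fix fitnesses `a σ > 0` and a mutation rate `0 < μ < 1/2`, and set
`K = (max_τ a_τ / min_τ a_τ)·((1−μ)^L − μ^L)`.  Then:
(1) each coordinate `r^σ` of the quasispecies map is `K`-Lipschitz on the set of
probability vectors on `{0,1}^L` with respect to the `ℓ¹` norm; and
(2) for every probability vector `x` and all `σ, σ'`, the partial derivative of `r^{σ'}`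
in the coordinate `x_σ` satisfies
`|∂r^{σ'}(x)/∂x_σ| = (a_σ / Σ_τ a_τ x_τ)·|Q_{σσ'} − r^{σ'}(x)| ≤ K`. -/
theorem qmap_lipschitz
    (L : ℕ) (a : Genome L → ℝ) (ha : ∀ σ, 0 < a σ)
    (μ : ℝ) (hμ0 : 0 < μ) (hμhalf : μ < 1 / 2)
    (K : ℝ)
    (hK : K = ((Finset.univ.sup' Finset.univ_nonempty a) /
        (Finset.univ.inf' Finset.univ_nonempty a)) * ((1 - μ) ^ L - μ ^ L)) :
    (∀ x y : Genome L → ℝ,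
      (∀ τ, 0 ≤ x τ) → (∑ τ, x τ = 1) → (∀ τ, 0 ≤ y τ) → (∑ τ, y τ = 1) →
      ∀ σ, |qmap a μ x σ - qmap a μ y σ| ≤ K * ∑ τ, |x τ - y τ|) ∧
    (∀ x : Genome L → ℝ, (∀ τ, 0 ≤ x τ) → (∑ τ, x τ = 1) →
      ∀ σ σ' : Genome L,
        |deriv (fun s : ℝ => qmap a μ (Function.update x σ s) σ') (x σ)| =
          (a σ / ∑ τ, a τ * x τ) * |Qmat L μ σ σ' - qmap a μ x σ'| ∧
        |deriv (fun s : ℝ => qmap a μ (Function.update x σ s) σ') (x σ)| ≤ K) := by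
  set m := univ.inf' univ_nonempty a
  set M := univ.sup' univ_nonempty a
  have hm : 0 < m := (lt_inf'_iff _).2 fun τ _ => ha τ
  have haM (τ : Genome L) : a τ ≤ M := le_sup' a (mem_univ τ)
  have hM : 0 ≤ M := (ha default).le.trans (haM default)
  have hD : 0 ≤ (1 - μ) ^ L - μ ^ L := sub_nonneg.2 (pow_le_pow_left₀ hμ0.le (by linarith) L)
  have hB := inf'_le_sum_mul_of_sum_eq_one a
  constructor
  · intro x y hx hxs hy hys σ
    calc |qmap a μ x σ - qmap a μ y σ|
        ≤ M * ((1 - μ) ^ L - μ ^ L) / (∑ τ, a τ * x τ) * ∑ τ, |x τ - y τ| :=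
          abs_weightedMean_sub_le _ _ (fun τ => (abs_of_pos (ha τ)).trans_le (haM τ))
            (abs_Qmat_sub_qmap_le ha hμ0.le hμhalf.le hy hys σ) (hm.trans_le (hB x hx hxs))
            (hm.trans_le (hB y hy hys)).ne'
      _ ≤ K * ∑ τ, |x τ - y τ| := by
          rw [hK, mul_div_right_comm]
          gcongr
          exact hB x hx hxs
  · intro x hx hxs σ σ'
    have hBx := hm.trans_le (hB x hx hxs)
    have habs : |deriv (fun s : ℝ => qmap a μ (Function.update x σ s) σ') (x σ)| =
        (a σ / ∑ τ, a τ * x τ) * |Qmat L μ σ σ' - qmap a μ x σ'| := by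
      simp_rw [qmap_eq_weightedMean]
      rw [(hasDerivAt_weightedMean_update a _ hBx.ne' σ).deriv, abs_mul,
        abs_of_pos (div_pos (ha σ) hBx)]
    refine ⟨habs, habs ▸ ?_⟩
    rw [hK]
    gcongr
    · exact haM σ
    · exact hB x hx hxs
    · exact abs_Qmat_sub_qmap_le ha hμ0.le hμhalf.le hx hxs σ' σ
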